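/- arXiv:1206.0803 — 4 statements merged into one kernel-verified Lean document; each statement's English description precedes it below -/
import Mathlib

section
/- The number of noncrossing partitions of {1,...,n} with exactly k blocks is the Narayana number N(n,k) = (1/k) * binomial(n-1, k-1) * binomial(n, k-1), and these satisfy the symmetry N(n,k) = N(n, n+1-k). -/
open Finset

/-- Two blocks `B`, `B'` cross if there are `a < a' < b < b'` with `a, b ∈ B`
and `a', b' ∈ B'`.  A partition is noncrossing if no two distinct blocks
cross. -/
def Noncrossing {n : ℕ} (P : Finpartition (Finset.univ : Finset (Fin n))) : Prop :=
  ∀ B ∈ P.parts, ∀ B' ∈ P.parts, B ≠ B' →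
    ¬ ∃ a a' b b' : Fin n, a ∈ B ∧ b ∈ B ∧ a' ∈ B' ∧ b' ∈ B' ∧
      a < a' ∧ a' < b ∧ b < b'

/-!
A noncrossing partition of `{0, …, n - 1}` is determined by the set `A` of its block minima and
the set `B` of its block maxima: scanning `0, 1, …` with a stack of open blocks, each `t` opens a
block if `t ∈ A` and otherwise joins the most recently opened block still open, which is forced by
noncrossing, and the top block is closed when `t ∈ B`. The pairs `(A, B)` that arise with `k`
blocks are exactly those with more blocks opened than closed at every time. Removing `0` from
`A`, shifting `A` down by one and removing `n - 1` from `B` turns them into the pairs of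
`(k - 1)`-subsets of `{0, …, n - 2}` in which `A` dominates `B` prefixwise. André's reflection
(swap the tails of `A` and `B` after the first violation) shows that the non-dominated pairs are
equinumerous with all pairs of sizes `(k - 2, k)`, whence the count
`C(n-1,k-1)² - C(n-1,k-2) C(n-1,k) = C(n-1,k-1) C(n,k-1) / k`. The symmetry is that of
`C(n,k) C(n,k-1) / n`, to which this is equal.
-/

namespace Narayana

section CountBelow

def countBelow (S : Finset ℕ) (t : ℕ) : ℕ := #(S.filter (· < t))

@[simp] lemma countBelow_zero (S : Finset ℕ) : countBelow S 0 = 0 := by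
  simp [countBelow]

lemma countBelow_succ (S : Finset ℕ) (t : ℕ) :
    countBelow S (t + 1) = countBelow S t + if t ∈ S then 1 else 0 := by
  have : S.filter (· < t + 1) = S.filter (· < t) ∪ S.filter (· = t) := by
    ext; simp only [mem_filter, mem_union]; grind
  rw [countBelow, countBelow, this, card_union_of_disjoint (disjoint_filter.2 fun _ _ h => h.ne),
    filter_eq']
  split_ifs <;> simp

lemma countBelow_of_subset_range {S : Finset ℕ} {m t : ℕ} (hS : S ⊆ range m) (h : m ≤ t) :
    countBelow S t = #S := by
  rw [countBelow, filter_true_of_mem fun x hx => (mem_range.1 (hS hx)).trans_le h]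

end CountBelow

section SwapTails

def swapTails (t₀ : ℕ) (q : Finset ℕ × Finset ℕ) : Finset ℕ × Finset ℕ :=
  (q.1.filter (· < t₀) ∪ q.2.filter (t₀ ≤ ·), q.2.filter (· < t₀) ∪ q.1.filter (t₀ ≤ ·))

lemma swapTails_swapTails (t₀ : ℕ) (q : Finset ℕ × Finset ℕ) :
    swapTails t₀ (swapTails t₀ q) = q := by
  ext x <;> by_cases h : x < t₀ <;> simp [swapTails, h, not_le.2, le_of_not_gt]

lemma countBelow_swapTails_fst {t₀ t : ℕ} (q : Finset ℕ × Finset ℕ) (ht : t ≤ t₀) :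
    countBelow (swapTails t₀ q).1 t = countBelow q.1 t := by
  unfold countBelow swapTails
  congr 1
  ext x
  simp only [mem_filter, mem_union]
  grind

lemma card_swapTails_fst (t₀ : ℕ) (q : Finset ℕ × Finset ℕ) :
    #(swapTails t₀ q).1 + countBelow q.2 t₀ = countBelow q.1 t₀ + #q.2 := by
  rw [swapTails, card_union_of_disjoint (disjoint_filter_filter' _ _ fun _ h₁ h₂ x hx =>
      (h₁ x hx).not_ge (h₂ x hx)), countBelow, countBelow,
    ← card_filter_add_card_filter_not (s := q.2) (p := (· < t₀))]
  simp only [not_lt]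
  omega

lemma swapTails_fst_subset {t₀ : ℕ} {q : Finset ℕ × Finset ℕ} {s : Finset ℕ}
    (h₁ : q.1 ⊆ s) (h₂ : q.2 ⊆ s) : (swapTails t₀ q).1 ⊆ s :=
  union_subset ((filter_subset _ _).trans h₁) ((filter_subset _ _).trans h₂)

end SwapTails

section Reflection

def violations (q : Finset ℕ × Finset ℕ) : Set ℕ := {t | countBelow q.1 t < countBelow q.2 t}

noncomputable def firstViolation (q : Finset ℕ × Finset ℕ) : ℕ := sInf (violations q)

noncomputable def reflect (q : Finset ℕ × Finset ℕ) : Finset ℕ × Finset ℕ :=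
  swapTails (firstViolation q) q

variable {q : Finset ℕ × Finset ℕ}

lemma countBelow_snd_le_of_lt_firstViolation {t : ℕ} (ht : t < firstViolation q) :
    countBelow q.2 t ≤ countBelow q.1 t :=
  not_lt.1 fun h => (Nat.sInf_le (show t ∈ violations q from h)).not_gt ht

lemma countBelow_snd_firstViolation (h : (violations q).Nonempty) :
    countBelow q.2 (firstViolation q) = countBelow q.1 (firstViolation q) + 1 := by
  have hv : countBelow q.1 (firstViolation q) < countBelow q.2 (firstViolation q) :=
    Nat.sInf_mem h
  obtain ⟨u, hu⟩ : ∃ u, firstViolation q = u + 1 :=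
    Nat.exists_eq_succ_of_ne_zero fun h₀ => by simp [h₀] at hv
  have hu' := countBelow_snd_le_of_lt_firstViolation (q := q) (t := u) (by omega)
  rw [hu, countBelow_succ, countBelow_succ] at hv ⊢
  split_ifs at hv ⊢ <;> omega

lemma countBelow_reflect {t : ℕ} (ht : t ≤ firstViolation q) :
    countBelow (reflect q).1 t = countBelow q.1 t ∧ countBelow (reflect q).2 t = countBelow q.2 t :=
  ⟨countBelow_swapTails_fst q ht, countBelow_swapTails_fst q.swap ht⟩

lemma firstViolation_reflect (h : (violations q).Nonempty) :
    (violations (reflect q)).Nonempty ∧ firstViolation (reflect q) = firstViolation q := by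
  have hmem : firstViolation q ∈ violations (reflect q) := by
    simp only [violations, Set.mem_ofPred_eq, countBelow_reflect le_rfl]
    exact Nat.sInf_mem h
  refine ⟨⟨_, hmem⟩, le_antisymm (Nat.sInf_le hmem) (le_csInf ⟨_, hmem⟩ fun t ht => ?_)⟩
  by_contra! hlt
  have ht' : countBelow (reflect q).1 t < countBelow (reflect q).2 t := ht
  rw [(countBelow_reflect hlt.le).1, (countBelow_reflect hlt.le).2] at ht'
  exact ht'.not_ge (countBelow_snd_le_of_lt_firstViolation hlt)

lemma reflect_reflect (h : (violations q).Nonempty) : reflect (reflect q) = q := by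
  rw [reflect, (firstViolation_reflect h).2]
  exact swapTails_swapTails _ _

lemma card_reflect (h : (violations q).Nonempty) :
    #(reflect q).1 + 1 = #q.2 ∧ #(reflect q).2 = #q.1 + 1 := by
  have h₁ := card_swapTails_fst (firstViolation q) q
  have h₂ : #(swapTails (firstViolation q) q).2 + countBelow q.1 (firstViolation q) =
      countBelow q.2 (firstViolation q) + #q.1 :=
    card_swapTails_fst _ q.swap
  have h₃ := countBelow_snd_firstViolation h
  exact ⟨by unfold reflect; omega, by unfold reflect; omega⟩

end Reflection

section Ballot

open scoped Classical

def pairs (m a b : ℕ) : Finset (Finset ℕ × Finset ℕ) :=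
  (range m).powersetCard a ×ˢ (range m).powersetCard b

variable {m a b p : ℕ} {q : Finset ℕ × Finset ℕ}

lemma mem_pairs :
    q ∈ pairs m a b ↔ (q.1 ⊆ range m ∧ #q.1 = a) ∧ (q.2 ⊆ range m ∧ #q.2 = b) := by
  simp [pairs, mem_powersetCard]

lemma card_pairs : #(pairs m a b) = m.choose a * m.choose b := by
  simp [pairs, card_powersetCard]

lemma violations_nonempty_of_card_lt (h₁ : q.1 ⊆ range m) (h₂ : q.2 ⊆ range m)
    (h : #q.1 < #q.2) : (violations q).Nonempty :=
  ⟨m, by simpa [violations, countBelow_of_subset_range h₁ le_rfl,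
    countBelow_of_subset_range h₂ le_rfl] using h⟩

lemma reflect_mem_pairs (hq : q ∈ pairs m a (b + 1)) (h : (violations q).Nonempty) :
    reflect q ∈ pairs m b (a + 1) := by
  rw [mem_pairs] at hq ⊢
  have hcard := card_reflect h
  exact ⟨⟨swapTails_fst_subset hq.1.1 hq.2.1, by omega⟩,
    ⟨swapTails_fst_subset (q := q.swap) hq.2.1 hq.1.1, by omega⟩⟩

lemma card_violating_pairs (m a b : ℕ) :
    #((pairs m a (b + 1)).filter fun q => (violations q).Nonempty) =
      #((pairs m b (a + 1)).filter fun q => (violations q).Nonempty) := by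
  refine card_bij' (fun q _ => reflect q) (fun q _ => reflect q) ?_ ?_ ?_ ?_ <;>
    simp only [mem_filter, and_imp]
  · exact fun q hq h => ⟨reflect_mem_pairs hq h, (firstViolation_reflect h).1⟩
  · exact fun q hq h => ⟨reflect_mem_pairs hq h, (firstViolation_reflect h).1⟩
  · exact fun q _ h => reflect_reflect h
  · exact fun q _ h => reflect_reflect h

noncomputable def dominatedPairs (m p : ℕ) : Finset (Finset ℕ × Finset ℕ) :=
  (pairs m p p).filter fun q => ¬ (violations q).Nonempty

lemma mem_dominatedPairs :
    q ∈ dominatedPairs m p ↔ q ∈ pairs m p p ∧ ∀ t, countBelow q.2 t ≤ countBelow q.1 t := by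
  simp [dominatedPairs, violations, Set.Nonempty]

lemma card_dominatedPairs_add_card_pairs (m p : ℕ) :
    #(dominatedPairs m (p + 1)) + #(pairs m p (p + 2)) = #(pairs m (p + 1) (p + 1)) := by
  have hviol : (pairs m p (p + 2)).filter (fun q => (violations q).Nonempty) = pairs m p (p + 2) :=
    filter_true_of_mem fun q hq => by
      rw [mem_pairs] at hq
      exact violations_nonempty_of_card_lt hq.1.1 hq.2.1 (by omega)
  rw [← hviol, ← card_violating_pairs, add_comm, dominatedPairs]
  exact card_filter_add_card_filter_not _

lemma add_two_mul_choose_sq (m p : ℕ) :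
    (p + 2) * (m.choose (p + 1) * m.choose (p + 1)) =
      (p + 2) * (m.choose p * m.choose (p + 2)) + m.choose (p + 1) * (m + 1).choose (p + 1) := by
  rcases lt_or_ge m (p + 1) with h | h
  · simp [Nat.choose_eq_zero_of_lt h, Nat.choose_eq_zero_of_lt (show m < p + 2 by omega)]
  obtain ⟨d, rfl⟩ := Nat.exists_eq_add_of_le h
  have h₁ := Nat.choose_succ_right_eq (p + 1 + d) (p + 1)
  have h₂ := Nat.choose_succ_right_eq (p + 1 + d) p
  rw [show p + 1 + d - (p + 1) = d by omega] at h₁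
  rw [show p + 1 + d - p = d + 1 by omega] at h₂
  rw [Nat.choose_succ_succ]
  zify at h₁ h₂ ⊢
  linear_combination ((p + 1 + d).choose (p + 1) : ℤ) * h₂ - ((p + 1 + d).choose p : ℤ) * h₁

theorem succ_mul_card_dominatedPairs (m p : ℕ) :
    (p + 1) * #(dominatedPairs m p) = m.choose p * (m + 1).choose p := by
  cases p with
  | zero =>
    have : dominatedPairs m 0 = pairs m 0 0 :=
      filter_true_of_mem fun q hq ⟨t, ht⟩ => by
        rw [mem_pairs, card_eq_zero, card_eq_zero] at hq
        simp [violations, countBelow, hq.2.2] at ht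
    simp [this, card_pairs]
  | succ p =>
    have h := card_dominatedPairs_add_card_pairs m p
    rw [card_pairs, card_pairs] at h
    have := add_two_mul_choose_sq m p
    rw [← h] at this
    nlinarith

end Ballot

section Stack

/-- The stack of open blocks, each recorded by its minimum, before step `t` of the scan
`0, 1, 2, …`: at step `t` we push `t` if it opens a block (`t ∈ A`), assign `t` to the block
on top, and pop that block if `t` closes it (`t ∈ B`). -/
def stack (A B : Finset ℕ) : ℕ → List ℕ
  | 0 => []
  | t + 1 =>
      let s := if t ∈ A then t :: stack A B t else stack A B t
      if t ∈ B then s.tail else s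

def stackAt (A B : Finset ℕ) (t : ℕ) : List ℕ :=
  if t ∈ A then t :: stack A B t else stack A B t

def label (A B : Finset ℕ) (t : ℕ) : ℕ := (stackAt A B t).headI

variable {A B : Finset ℕ} {n t u x : ℕ}

lemma stack_succ (A B : Finset ℕ) (t : ℕ) :
    stack A B (t + 1) = if t ∈ B then (stackAt A B t).tail else stackAt A B t := rfl

lemma mem_stackAt_iff : x ∈ stackAt A B t ↔ (x = t ∧ t ∈ A) ∨ x ∈ stack A B t := by
  unfold stackAt
  split_ifs with h <;> simp [h]

lemma mem_stackAt_of_mem_stack_succ (h : x ∈ stack A B (t + 1)) : x ∈ stackAt A B t := by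
  rw [stack_succ] at h
  split_ifs at h
  exacts [List.mem_of_mem_tail h, h]

lemma mem_stack (h : x ∈ stack A B t) : x ∈ A ∧ x < t := by
  induction t with
  | zero => simp [stack] at h
  | succ t ih =>
    rcases mem_stackAt_iff.1 (mem_stackAt_of_mem_stack_succ h) with ⟨rfl, hA⟩ | h'
    · exact ⟨hA, by omega⟩
    · exact ⟨(ih h').1, by have := (ih h').2; omega⟩

lemma mem_stackAt (h : x ∈ stackAt A B t) : x ∈ A ∧ x ≤ t := by
  rcases mem_stackAt_iff.1 h with ⟨rfl, hA⟩ | h'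
  exacts [⟨hA, le_rfl⟩, ⟨(mem_stack h').1, (mem_stack h').2.le⟩]

lemma stackAt_pairwise_of_stack (h : (stack A B t).Pairwise (· > ·)) :
    (stackAt A B t).Pairwise (· > ·) := by
  unfold stackAt
  split_ifs
  exacts [List.pairwise_cons.2 ⟨fun _ hy => (mem_stack hy).2, h⟩, h]

lemma stack_pairwise (A B : Finset ℕ) (t : ℕ) : (stack A B t).Pairwise (· > ·) := by
  induction t with
  | zero => simp [stack]
  | succ t ih =>
    rw [stack_succ]
    split_ifs
    exacts [(stackAt_pairwise_of_stack ih).tail, stackAt_pairwise_of_stack ih]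

lemma stackAt_pairwise (A B : Finset ℕ) (t : ℕ) : (stackAt A B t).Pairwise (· > ·) :=
  stackAt_pairwise_of_stack (stack_pairwise A B t)

lemma label_of_mem (h : t ∈ A) : label A B t = t := by
  simp [label, stackAt, h]

lemma le_label (hx : x ∈ stackAt A B t) : x ≤ label A B t := by
  have hs := stackAt_pairwise A B t
  unfold label
  cases h : stackAt A B t with
  | nil => simp [h] at hx
  | cons y l =>
    rw [h] at hx hs
    rcases List.mem_cons.1 hx with rfl | hx
    exacts [le_rfl, (List.rel_of_pairwise_cons hs hx).le]

lemma mem_tail_stackAt_iff : x ∈ (stackAt A B t).tail ↔ x ∈ stackAt A B t ∧ x ≠ label A B t := by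
  have hs := stackAt_pairwise A B t
  unfold label
  cases h : stackAt A B t with
  | nil => simp
  | cons y l =>
    rw [h] at hs
    simp only [List.tail_cons, List.mem_cons, List.headI_cons]
    constructor
    · exact fun hx => ⟨Or.inr hx, (List.rel_of_pairwise_cons hs hx).ne⟩
    · rintro ⟨rfl | hx, hne⟩
      exacts [absurd rfl hne, hx]

lemma length_stackAt : (stackAt A B t).length = (stack A B t).length + if t ∈ A then 1 else 0 := by
  unfold stackAt
  split_ifs <;> simp

lemma eq_label_of_mem_stackAt_of_not_mem_stack_succ (hx : x ∈ stackAt A B t)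
    (hx' : x ∉ stack A B (t + 1)) : x = label A B t := by
  rw [stack_succ] at hx'
  split_ifs at hx'
  · by_contra h
    exact hx' (mem_tail_stackAt_iff.2 ⟨hx, h⟩)
  · exact absurd hx hx'

lemma not_mem_stackAt_of_le (hx : x ∉ stackAt A B t) (hxt : x ≤ t) (htu : t ≤ u) :
    x ∉ stackAt A B u := by
  induction u, htu using Nat.le_induction with
  | base => exact hx
  | succ u htu ih =>
    rw [mem_stackAt_iff, not_or]
    exact ⟨fun h => by omega, fun h => ih (mem_stackAt_of_mem_stack_succ h)⟩

/-- `A` and `B` are the candidate sets of block minima and block maxima of a partition of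
`{0, …, n - 1}`. -/
structure IsBalanced (n : ℕ) (A B : Finset ℕ) : Prop where
  subset_left : A ⊆ range n
  subset_right : B ⊆ range n
  card_eq : #A = #B
  countBelow_lt : ∀ t < n, countBelow B t < countBelow A (t + 1)

namespace IsBalanced

variable (hv : IsBalanced n A B)
include hv

lemma length_stack (ht : t ≤ n) : (stack A B t).length + countBelow B t = countBelow A t := by
  induction t with
  | zero => simp [stack]
  | succ t ih =>
    have ih := ih (by omega)
    have hlt := hv.countBelow_lt t (by omega)
    have hlen := length_stackAt (A := A) (B := B) (t := t)
    rw [countBelow_succ] at hlt ⊢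
    rw [countBelow_succ, stack_succ]
    split_ifs at hlt hlen ⊢ <;> (try rw [List.length_tail]) <;> omega

lemma stackAt_ne_nil (ht : t < n) : stackAt A B t ≠ [] := by
  have := hv.length_stack ht.le
  have := hv.countBelow_lt t ht
  have hlen := length_stackAt (A := A) (B := B) (t := t)
  rw [countBelow_succ] at this
  rw [← List.length_pos_iff]
  split_ifs at hlen this <;> omega

lemma label_mem_stackAt (ht : t < n) : label A B t ∈ stackAt A B t := by
  have := hv.stackAt_ne_nil ht
  unfold label
  cases h : stackAt A B t
  exacts [absurd h this, List.mem_cons_self]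

lemma label_mem (ht : t < n) : label A B t ∈ A := (mem_stackAt (hv.label_mem_stackAt ht)).1

lemma label_le (ht : t < n) : label A B t ≤ t := (mem_stackAt (hv.label_mem_stackAt ht)).2

lemma label_mem_stackAt_of_le {j : ℕ} (hj : j < n) (hjt : label A B j ≤ t) (htj : t ≤ j) :
    label A B j ∈ stackAt A B t :=
  by_contra fun h => not_mem_stackAt_of_le h hjt htj (hv.label_mem_stackAt hj)

lemma stack_eq_nil : stack A B n = [] := by
  have := hv.length_stack le_rfl
  rw [countBelow_of_subset_range hv.subset_left le_rfl,
    countBelow_of_subset_range hv.subset_right le_rfl, hv.card_eq] at this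
  exact List.eq_nil_of_length_eq_zero (by omega)

lemma exists_label_eq (ht : t ≤ n) (hx : x ∈ stack A B t) :
    ∃ j, t ≤ j ∧ j < n ∧ label A B j = x := by
  induction ht using Nat.decreasingInduction with
  | self => simp [hv.stack_eq_nil] at hx
  | of_succ t ht ih =>
    by_cases hx' : x ∈ stack A B (t + 1)
    · obtain ⟨j, htj, hj, rfl⟩ := ih hx'
      exact ⟨j, by omega, hj, rfl⟩
    · exact ⟨t, le_rfl, ht, (eq_label_of_mem_stackAt_of_not_mem_stack_succ
        (mem_stackAt_iff.2 (Or.inr hx)) hx').symm⟩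

lemma exists_label_eq_of_not_mem (ht : t < n) (htB : t ∉ B) :
    ∃ j, t < j ∧ j < n ∧ label A B j = label A B t := by
  have hx : label A B t ∈ stack A B (t + 1) := by
    rw [stack_succ, if_neg htB]
    exact hv.label_mem_stackAt ht
  exact hv.exists_label_eq ht hx

lemma label_noncrossing {a a' b b' : ℕ} (hab : a < a') (ha'b : a' < b) (hbb' : b < b')
    (hb' : b' < n) (h : label A B a = label A B b) (h' : label A B a' = label A B b') :
    label A B a = label A B a' := by
  have ha := hv.label_le (show a < n by omega)
  have ha' := hv.label_le (show a' < n by omega)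
  -- the block of `a` is still open at `a'`, and that of `a'` at `b`; each lies below the top
  have h₁ : label A B a ≤ label A B a' := by
    rw [h]
    exact le_label (hv.label_mem_stackAt_of_le (by omega) (by omega) ha'b.le)
  have h₂ : label A B a' ≤ label A B b := by
    rw [h']
    exact le_label (hv.label_mem_stackAt_of_le hb' (by omega) hbb'.le)
  omega

end IsBalanced

end Stack

section Blocks

variable {n : ℕ}

def minVal (P : Finset (Fin n)) : ℕ := if h : P.Nonempty then P.min' h else 0

def maxVal (P : Finset (Fin n)) : ℕ := if h : P.Nonempty then P.max' h else 0

variable {P : Finset (Fin n)} {i : Fin n}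

lemma minVal_le (hi : i ∈ P) : minVal P ≤ i := by
  rw [minVal, dif_pos ⟨i, hi⟩]
  exact P.min'_le i hi

lemma le_maxVal (hi : i ∈ P) : (i : ℕ) ≤ maxVal P := by
  rw [maxVal, dif_pos ⟨i, hi⟩]
  exact P.le_max' i hi

lemma exists_mem_val_eq_minVal (h : P.Nonempty) : ∃ i ∈ P, (i : ℕ) = minVal P :=
  ⟨P.min' h, P.min'_mem h, by rw [minVal, dif_pos h]⟩

lemma exists_mem_val_eq_maxVal (h : P.Nonempty) : ∃ i ∈ P, (i : ℕ) = maxVal P :=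
  ⟨P.max' h, P.max'_mem h, by rw [maxVal, dif_pos h]⟩

lemma minVal_le_maxVal (h : P.Nonempty) : minVal P ≤ maxVal P := by
  obtain ⟨i, hi, -⟩ := exists_mem_val_eq_minVal h
  exact (minVal_le hi).trans (le_maxVal hi)

lemma maxVal_lt (h : P.Nonempty) : maxVal P < n := by
  obtain ⟨i, -, hi⟩ := exists_mem_val_eq_maxVal h
  exact hi ▸ i.isLt

lemma minVal_lt (h : P.Nonempty) : minVal P < n := (minVal_le_maxVal h).trans_lt (maxVal_lt h)

variable (π : Finpartition (univ : Finset (Fin n)))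

lemma _root_.Finpartition.eq_of_val_eq {P Q : Finset (Fin n)} (hP : P ∈ π.parts)
    (hQ : Q ∈ π.parts) {i j : Fin n} (hi : i ∈ P) (hj : j ∈ Q) (h : (i : ℕ) = j) : P = Q :=
  π.eq_of_mem_parts hP hQ hi (Fin.ext h ▸ hj)

lemma minVal_injOn : Set.InjOn minVal (π.parts : Set (Finset (Fin n))) := fun P hP Q hQ h => by
  obtain ⟨i, hi, hiP⟩ := exists_mem_val_eq_minVal (π.nonempty_of_mem_parts hP)
  obtain ⟨j, hj, hjQ⟩ := exists_mem_val_eq_minVal (π.nonempty_of_mem_parts hQ)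
  exact π.eq_of_val_eq hP hQ hi hj (by rw [hiP, hjQ, h])

lemma maxVal_injOn : Set.InjOn maxVal (π.parts : Set (Finset (Fin n))) := fun P hP Q hQ h => by
  obtain ⟨i, hi, hiP⟩ := exists_mem_val_eq_maxVal (π.nonempty_of_mem_parts hP)
  obtain ⟨j, hj, hjQ⟩ := exists_mem_val_eq_maxVal (π.nonempty_of_mem_parts hQ)
  exact π.eq_of_val_eq hP hQ hi hj (by rw [hiP, hjQ, h])

def blockMins : Finset ℕ := π.parts.image minVal

def blockMaxs : Finset ℕ := π.parts.image maxVal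

lemma card_blockMins : #(blockMins π) = #π.parts := card_image_of_injOn (minVal_injOn π)

lemma card_blockMaxs : #(blockMaxs π) = #π.parts := card_image_of_injOn (maxVal_injOn π)

lemma countBelow_blockMins (t : ℕ) :
    countBelow (blockMins π) t = #(π.parts.filter (minVal · < t)) := by
  rw [countBelow, blockMins, filter_image]
  exact card_image_of_injOn ((minVal_injOn π).mono (filter_subset _ _))

lemma countBelow_blockMaxs (t : ℕ) :
    countBelow (blockMaxs π) t = #(π.parts.filter (maxVal · < t)) := by
  rw [countBelow, blockMaxs, filter_image]
  exact card_image_of_injOn ((maxVal_injOn π).mono (filter_subset _ _))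

/-- Every block closed before `t` was opened before `t`, and the block of `t` is open at `t`. -/
lemma isBalanced_blockMins_blockMaxs : IsBalanced n (blockMins π) (blockMaxs π) where
  subset_left _ hx := by
    obtain ⟨P, hP, rfl⟩ := mem_image.1 hx
    exact mem_range.2 (minVal_lt (π.nonempty_of_mem_parts hP))
  subset_right _ hx := by
    obtain ⟨P, hP, rfl⟩ := mem_image.1 hx
    exact mem_range.2 (maxVal_lt (π.nonempty_of_mem_parts hP))
  card_eq := by rw [card_blockMins, card_blockMaxs]
  countBelow_lt t ht := by
    rw [countBelow_blockMins, countBelow_blockMaxs]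
    refine card_lt_card ⟨monotone_filter_right _ fun P hP h =>
      (minVal_le_maxVal (π.nonempty_of_mem_parts hP)).trans_lt (h.trans t.lt_succ_self), ?_⟩
    intro hsub
    have hmem : π.part ⟨t, ht⟩ ∈ π.parts.filter (minVal · < t + 1) :=
      mem_filter.2 ⟨π.part_mem.2 (mem_univ _),
        Nat.lt_succ_of_le (minVal_le (π.mem_part (mem_univ _)))⟩
    exact (le_maxVal (π.mem_part (mem_univ ⟨t, ht⟩))).not_gt (mem_filter.1 (hsub hmem)).2

end Blocks

section OfLabels

variable {n : ℕ} {A B : Finset ℕ}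

instance {α β : Type*} [DecidableEq β] (f : α → β) : DecidableRel (Setoid.ker f).r :=
  fun a b => decEq (f a) (f b)

def ofLabels (A B : Finset ℕ) : Finpartition (univ : Finset (Fin n)) :=
  Finpartition.ofSetoid (Setoid.ker fun i : Fin n => label A B i)

def labelFiber (n : ℕ) (A B : Finset ℕ) (a : ℕ) : Finset (Fin n) :=
  univ.filter fun j => label A B j = a

lemma mem_labelFiber {a : ℕ} {j : Fin n} : j ∈ labelFiber n A B a ↔ label A B j = a := by
  simp [labelFiber]

lemma part_ofLabels (i : Fin n) : (ofLabels A B).part i = labelFiber n A B (label A B i) := by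
  ext j
  rw [ofLabels, Finpartition.mem_part_ofSetoid_iff_rel, Setoid.ker_def, mem_labelFiber, eq_comm]

lemma mem_parts_ofLabels {X : Finset (Fin n)} :
    X ∈ (ofLabels A B).parts ↔ ∃ i : Fin n, labelFiber n A B (label A B i) = X := by
  constructor
  · intro hX
    obtain ⟨i, hi⟩ := (ofLabels A B).nonempty_of_mem_parts hX
    exact ⟨i, (part_ofLabels i).symm.trans ((ofLabels A B).part_eq_of_mem hX hi)⟩
  · rintro ⟨i, rfl⟩
    rw [← part_ofLabels]
    exact (ofLabels A B).part_mem.2 (mem_univ _)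

namespace IsBalanced

variable (hv : IsBalanced n A B)
include hv

lemma lt_of_mem {a : ℕ} (ha : a ∈ A) : a < n := mem_range.1 (hv.subset_left ha)

lemma parts_ofLabels : (ofLabels A B).parts = A.image (labelFiber n A B) := by
  ext X
  rw [mem_parts_ofLabels, mem_image]
  constructor
  · rintro ⟨i, rfl⟩
    exact ⟨_, hv.label_mem i.isLt, rfl⟩
  · rintro ⟨a, ha, rfl⟩
    exact ⟨⟨a, hv.lt_of_mem ha⟩, by rw [label_of_mem ha]⟩

lemma mem_labelFiber_self {a : ℕ} (ha : a ∈ A) : ⟨a, hv.lt_of_mem ha⟩ ∈ labelFiber n A B a :=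
  mem_labelFiber.2 (label_of_mem ha)

lemma card_parts_ofLabels : #(ofLabels A B : Finpartition (univ : Finset (Fin n))).parts = #A := by
  rw [hv.parts_ofLabels]
  refine card_image_of_injOn fun a ha b _ hab => ?_
  have := mem_labelFiber.1 (hab ▸ hv.mem_labelFiber_self ha : _ ∈ labelFiber n A B b)
  rwa [label_of_mem ha] at this

lemma noncrossing_ofLabels : Noncrossing (ofLabels A B : Finpartition (univ : Finset (Fin n))) := by
  rintro X hX X' hX' hne ⟨a, a', b, b', ha, hb, ha', hb', h₁, h₂, h₃⟩
  obtain ⟨i, rfl⟩ := mem_parts_ofLabels.1 hX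
  obtain ⟨i', rfl⟩ := mem_parts_ofLabels.1 hX'
  rw [mem_labelFiber] at ha hb ha' hb'
  refine hne ?_
  rw [← ha, ← ha', hv.label_noncrossing h₁ h₂ h₃ b'.isLt (ha.trans hb.symm) (ha'.trans hb'.symm)]

lemma minVal_labelFiber {a : ℕ} (ha : a ∈ A) : minVal (labelFiber n A B a) = a := by
  refine le_antisymm (minVal_le (hv.mem_labelFiber_self ha)) ?_
  obtain ⟨i, hi, hmin⟩ := exists_mem_val_eq_minVal ⟨_, hv.mem_labelFiber_self ha⟩
  rw [← hmin, ← mem_labelFiber.1 hi]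
  exact hv.label_le i.isLt

lemma blockMins_ofLabels : blockMins (ofLabels A B : Finpartition (univ : Finset (Fin n))) = A := by
  rw [blockMins, hv.parts_ofLabels, image_image]
  exact (image_congr fun a ha => hv.minVal_labelFiber ha).trans image_id

lemma blockMaxs_ofLabels : blockMaxs (ofLabels A B : Finpartition (univ : Finset (Fin n))) = B := by
  refine eq_of_subset_of_card_le (fun x hx => ?_) ?_
  · obtain ⟨X, hX, rfl⟩ := mem_image.1 hx
    obtain ⟨i, hi, hmax⟩ := exists_mem_val_eq_maxVal ((ofLabels A B).nonempty_of_mem_parts hX)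
    obtain ⟨a, -, rfl⟩ := mem_image.1 (hv.parts_ofLabels ▸ hX)
    by_contra hB
    obtain ⟨j, hij, hj, hlabel⟩ := hv.exists_label_eq_of_not_mem (hmax ▸ i.isLt) (hmax ▸ hB)
    have hj' : (⟨j, hj⟩ : Fin n) ∈ labelFiber n A B a := by
      rw [mem_labelFiber, ← mem_labelFiber.1 hi, hmax]
      exact hlabel
    exact (le_maxVal hj').not_gt (hmax ▸ hij)
  · rw [card_blockMaxs, hv.card_parts_ofLabels, hv.card_eq]

end IsBalanced

end OfLabels

section NoncrossingBlocks

variable {n : ℕ} (π : Finpartition (univ : Finset (Fin n))) {P : Finset (Fin n)} {t : ℕ}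

lemma part_eq_of_minVal_eq (hP : P ∈ π.parts) (ht : t < n) (h : minVal P = t) :
    P = π.part ⟨t, ht⟩ := by
  obtain ⟨i, hi, hiP⟩ := exists_mem_val_eq_minVal (π.nonempty_of_mem_parts hP)
  exact π.eq_of_val_eq hP (π.part_mem.2 (mem_univ _)) hi (π.mem_part (mem_univ _)) (hiP.trans h)

lemma part_eq_of_maxVal_eq (hP : P ∈ π.parts) (ht : t < n) (h : maxVal P = t) :
    P = π.part ⟨t, ht⟩ := by
  obtain ⟨i, hi, hiP⟩ := exists_mem_val_eq_maxVal (π.nonempty_of_mem_parts hP)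
  exact π.eq_of_val_eq hP (π.part_mem.2 (mem_univ _)) hi (π.mem_part (mem_univ _)) (hiP.trans h)

/-- Otherwise `minVal (π.part t) < minVal P < t < maxVal P` would be a crossing. -/
lemma minVal_le_minVal_part (hnc : Noncrossing π) (ht : t < n) (hP : P ∈ π.parts)
    (h₁ : minVal P ≤ t) (h₂ : t ≤ maxVal P) : minVal P ≤ minVal (π.part ⟨t, ht⟩) := by
  set Q := π.part ⟨t, ht⟩
  have hQ : Q ∈ π.parts := π.part_mem.2 (mem_univ _)
  by_cases hPQ : P = Q
  · rw [hPQ]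
  by_contra! hlt
  have h₁' : minVal P < t := h₁.lt_of_ne fun h => hPQ (part_eq_of_minVal_eq π hP ht h)
  have h₂' : t < maxVal P := h₂.lt_of_ne fun h => hPQ (part_eq_of_maxVal_eq π hP ht h.symm)
  obtain ⟨a, ha, haQ⟩ := exists_mem_val_eq_minVal (π.nonempty_of_mem_parts hQ)
  obtain ⟨a', ha', ha'P⟩ := exists_mem_val_eq_minVal (π.nonempty_of_mem_parts hP)
  obtain ⟨b', hb', hb'P⟩ := exists_mem_val_eq_maxVal (π.nonempty_of_mem_parts hP)
  refine hnc Q hQ P hP (Ne.symm hPQ) ⟨a, a', ⟨t, ht⟩, b', ha, π.mem_part (mem_univ _), ha', hb',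
    ?_, ?_, ?_⟩ <;> simp only [Fin.lt_def] <;> omega

end NoncrossingBlocks

section StackOfBlocks

variable {n : ℕ} (π : Finpartition (univ : Finset (Fin n))) {t : ℕ}

lemma mem_stackAt_blocks_iff (ht : t < n)
    (hstack : ∀ x, x ∈ stack (blockMins π) (blockMaxs π) t ↔
      ∃ P ∈ π.parts, minVal P = x ∧ x < t ∧ t ≤ maxVal P) (x : ℕ) :
    x ∈ stackAt (blockMins π) (blockMaxs π) t ↔
      ∃ P ∈ π.parts, minVal P = x ∧ x ≤ t ∧ t ≤ maxVal P := by
  rw [mem_stackAt_iff, hstack]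
  constructor
  · rintro (⟨rfl, hx⟩ | ⟨P, hP, rfl, hlt, hle⟩)
    · obtain ⟨P, hP, hPx⟩ := mem_image.1 hx
      exact ⟨P, hP, hPx, le_rfl, hPx ▸ minVal_le_maxVal (π.nonempty_of_mem_parts hP)⟩
    · exact ⟨P, hP, rfl, hlt.le, hle⟩
  · rintro ⟨P, hP, rfl, hle, hmax⟩
    rcases hle.lt_or_eq with hlt | heq
    · exact Or.inr ⟨P, hP, rfl, hlt, hmax⟩
    · exact Or.inl ⟨heq, mem_image.2 ⟨P, hP, heq⟩⟩

variable {π}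

lemma label_blocks_eq_of_mem_stack_iff (hnc : Noncrossing π) (ht : t < n)
    (hstack : ∀ x, x ∈ stack (blockMins π) (blockMaxs π) t ↔
      ∃ P ∈ π.parts, minVal P = x ∧ x < t ∧ t ≤ maxVal P) :
    label (blockMins π) (blockMaxs π) t = minVal (π.part ⟨t, ht⟩) := by
  have hQ := π.mem_part (mem_univ ⟨t, ht⟩)
  refine le_antisymm ?_ (le_label ((mem_stackAt_blocks_iff π ht hstack _).2
    ⟨_, π.part_mem.2 (mem_univ _), rfl, minVal_le hQ, le_maxVal hQ⟩))
  obtain ⟨P, hP, hPx, hle, hmax⟩ := (mem_stackAt_blocks_iff π ht hstack _).1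
    ((isBalanced_blockMins_blockMaxs π).label_mem_stackAt ht)
  exact hPx ▸ minVal_le_minVal_part π hnc ht hP (hPx ▸ hle) hmax

lemma mem_stack_blocks_iff (hnc : Noncrossing π) (ht : t ≤ n) (x : ℕ) :
    x ∈ stack (blockMins π) (blockMaxs π) t ↔
      ∃ P ∈ π.parts, minVal P = x ∧ x < t ∧ t ≤ maxVal P := by
  induction t generalizing x with
  | zero => simp [stack]
  | succ t ih =>
    have ht : t < n := by omega
    have hstackAt := mem_stackAt_blocks_iff π ht (ih ht.le)
    have hlabel := label_blocks_eq_of_mem_stack_iff hnc ht (ih ht.le)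
    have hQ : π.part ⟨t, ht⟩ ∈ π.parts := π.part_mem.2 (mem_univ _)
    rw [stack_succ]
    split_ifs with hB
    · obtain ⟨Q, hQ', hQt⟩ := mem_image.1 hB
      have hQeq := part_eq_of_maxVal_eq π hQ' ht hQt
      subst hQeq
      rw [mem_tail_stackAt_iff, hstackAt, hlabel]
      constructor
      · rintro ⟨⟨P, hP, rfl, hle, hmax⟩, hne⟩
        refine ⟨P, hP, rfl, by omega, hmax.lt_of_ne fun h => hne ?_⟩
        rw [part_eq_of_maxVal_eq π hP ht h.symm]
      · rintro ⟨P, hP, rfl, hlt, hmax⟩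
        refine ⟨⟨P, hP, rfl, by omega, by omega⟩, fun h => ?_⟩
        rw [minVal_injOn π hP hQ h] at hmax
        omega
    · rw [hstackAt]
      refine exists_congr fun P => and_congr_right fun hP => and_congr_right fun _ =>
        and_congr (by omega) ⟨fun h => h.lt_of_ne fun h' => hB ?_, fun h => by omega⟩
      exact mem_image.2 ⟨P, hP, h'.symm⟩

lemma label_blocks (hnc : Noncrossing π) (i : Fin n) :
    label (blockMins π) (blockMaxs π) i = minVal (π.part i) :=
  label_blocks_eq_of_mem_stack_iff hnc i.isLt (mem_stack_blocks_iff hnc i.isLt.le)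

lemma ofLabels_blocks (hnc : Noncrossing π) : ofLabels (blockMins π) (blockMaxs π) = π := by
  have hpart (i : Fin n) :
      labelFiber n (blockMins π) (blockMaxs π) (minVal (π.part i)) = π.part i := by
    ext j
    rw [mem_labelFiber, label_blocks hnc, (minVal_injOn π).eq_iff (by simp) (by simp),
      π.mem_part_iff_part_eq_part (mem_univ _) (mem_univ _)]
  ext X
  simp only [mem_parts_ofLabels, label_blocks hnc, hpart]
  constructor
  · rintro ⟨i, rfl⟩
    simp
  · intro hX
    obtain ⟨i, -, hi⟩ := π.part_surjOn hX
    exact ⟨i, hi⟩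

end StackOfBlocks

section Bijection

variable {n k : ℕ} {q : Finset ℕ × Finset ℕ}

def balancedPairs (n k : ℕ) : Finset (Finset ℕ × Finset ℕ) :=
  (pairs n k k).filter fun q => ∀ t < n, countBelow q.2 t < countBelow q.1 (t + 1)

lemma mem_balancedPairs : q ∈ balancedPairs n k ↔ IsBalanced n q.1 q.2 ∧ #q.1 = k := by
  rw [balancedPairs, mem_filter, mem_pairs]
  constructor
  · rintro ⟨⟨⟨h₁, rfl⟩, h₂, h₃⟩, h⟩
    exact ⟨⟨h₁, h₂, h₃.symm, h⟩, rfl⟩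
  · rintro ⟨⟨h₁, h₂, h₃, h⟩, rfl⟩
    exact ⟨⟨⟨h₁, rfl⟩, h₂, h₃.symm⟩, h⟩

open scoped Classical in
theorem card_noncrossing_eq_card_balancedPairs (n k : ℕ) :
    #(univ.filter fun π : Finpartition (univ : Finset (Fin n)) =>
        Noncrossing π ∧ #π.parts = k) = #(balancedPairs n k) := by
  refine card_bij' (fun π _ => (blockMins π, blockMaxs π)) (fun q _ => ofLabels q.1 q.2)
    ?_ ?_ ?_ ?_ <;> simp only [mem_filter, mem_univ, true_and, mem_balancedPairs, and_imp]
  · rintro π - rfl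
    exact ⟨isBalanced_blockMins_blockMaxs π, card_blockMins π⟩
  · rintro q hv rfl
    exact ⟨hv.noncrossing_ofLabels, hv.card_parts_ofLabels⟩
  · exact fun π hnc _ => ofLabels_blocks hnc
  · exact fun q hv _ => Prod.ext hv.blockMins_ofLabels hv.blockMaxs_ofLabels

end Bijection

section Shift

variable {m p : ℕ} {A B : Finset ℕ} {q : Finset ℕ × Finset ℕ}

def shiftUp (C : Finset ℕ) : Finset ℕ := insert 0 (C.image (· + 1))

lemma zero_notMem_image_succ (C : Finset ℕ) : 0 ∉ C.image (· + 1) := by simp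

lemma card_shiftUp (C : Finset ℕ) : #(shiftUp C) = #C + 1 := by
  rw [shiftUp, card_insert_of_notMem (zero_notMem_image_succ C),
    card_image_of_injective _ (add_left_injective 1)]

lemma shiftUp_subset_range_iff {C : Finset ℕ} : shiftUp C ⊆ range (m + 1) ↔ C ⊆ range m := by
  simp [shiftUp, subset_iff]

lemma countBelow_shiftUp (C : Finset ℕ) (t : ℕ) :
    countBelow (shiftUp C) (t + 1) = countBelow C t + 1 := by
  rw [countBelow, shiftUp, filter_insert, if_pos t.succ_pos,
    card_insert_of_notMem fun h => zero_notMem_image_succ C (mem_filter.1 h).1, filter_image,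
    card_image_of_injective _ (add_left_injective 1)]
  simp [countBelow]

lemma shiftUp_injective : Function.Injective shiftUp := fun C D h => by
  ext x
  simpa [shiftUp] using congrArg (x + 1 ∈ ·) h

lemma shiftUp_erase_zero_image_pred (h : 0 ∈ A) : shiftUp ((A.erase 0).image (· - 1)) = A := by
  ext x
  rcases x with _ | x
  · simp [shiftUp, h]
  · simp only [shiftUp, mem_insert, mem_image, mem_erase]
    constructor
    · rintro (h | ⟨_, ⟨z, ⟨hz, hzA⟩, rfl⟩, hzx⟩)
      · omega
      · rwa [show x + 1 = z by omega]
    · exact fun hx => Or.inr ⟨x, ⟨x + 1, ⟨x.succ_ne_zero, hx⟩, rfl⟩, rfl⟩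

lemma countBelow_insert_of_le {x t : ℕ} (h : t ≤ x) :
    countBelow (insert x B) t = countBelow B t := by
  rw [countBelow, countBelow, filter_insert, if_neg h.not_gt]

lemma subset_range_of_notMem {S : Finset ℕ} (h : S ⊆ range (m + 1)) (hm : m ∉ S) :
    S ⊆ range m :=
  (subset_insert_iff_of_notMem hm).1 (range_add_one ▸ h)

namespace IsBalanced

lemma zero_mem (hv : IsBalanced (m + 1) A B) : 0 ∈ A := by
  have := hv.countBelow_lt 0 m.succ_pos
  rw [countBelow_zero] at this
  obtain ⟨a, ha⟩ := card_pos.1 this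
  rw [mem_filter, Nat.lt_one_iff] at ha
  exact ha.2 ▸ ha.1

lemma last_mem (hv : IsBalanced (m + 1) A B) : m ∈ B := by
  by_contra hm
  have hB := subset_range_of_notMem hv.subset_right hm
  have := hv.countBelow_lt m m.lt_succ_self
  rw [countBelow_of_subset_range hB le_rfl, countBelow_of_subset_range hv.subset_left le_rfl,
    hv.card_eq] at this
  exact this.false

end IsBalanced

lemma shift_mem_balancedPairs (hq : q ∈ dominatedPairs m p) :
    (shiftUp q.1, insert m q.2) ∈ balancedPairs (m + 1) (p + 1) := by
  obtain ⟨hq, hdom⟩ := mem_dominatedPairs.1 hq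
  obtain ⟨⟨h₁, hc₁⟩, h₂, hc₂⟩ := mem_pairs.1 hq
  have hm : m ∉ q.2 := fun h => (mem_range.1 (h₂ h)).false
  refine mem_balancedPairs.2 ⟨⟨shiftUp_subset_range_iff.2 h₁, ?_, ?_, fun t ht => ?_⟩, ?_⟩
  · exact insert_subset (self_mem_range_succ m) (h₂.trans (range_subset_range.2 m.le_succ))
  · rw [card_shiftUp, card_insert_of_notMem hm, hc₁, hc₂]
  · rw [countBelow_insert_of_le (Nat.lt_succ_iff.1 ht), countBelow_shiftUp]
    exact Nat.lt_succ_of_le (hdom t)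
  · rw [card_shiftUp, hc₁]

lemma exists_shift_eq (hq : q ∈ balancedPairs (m + 1) (p + 1)) :
    ∃ q' ∈ dominatedPairs m p, (shiftUp q'.1, insert m q'.2) = q := by
  obtain ⟨hv, hcard⟩ := mem_balancedPairs.1 hq
  set C := (q.1.erase 0).image (· - 1)
  have hA : shiftUp C = q.1 := shiftUp_erase_zero_image_pred hv.zero_mem
  have hB : insert m (q.2.erase m) = q.2 := insert_erase hv.last_mem
  have hC : C ⊆ range m := shiftUp_subset_range_iff.1 (hA ▸ hv.subset_left)
  have hB' : q.2.erase m ⊆ range m :=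
    subset_range_of_notMem ((erase_subset m q.2).trans hv.subset_right) (notMem_erase m q.2)
  have hcC : #C = p := by
    have := card_shiftUp C
    rw [hA, hcard] at this
    omega
  have hcB : #(q.2.erase m) = p := by
    rw [card_erase_of_mem hv.last_mem, ← hv.card_eq, hcard, Nat.add_sub_cancel]
  refine ⟨(C, q.2.erase m), mem_dominatedPairs.2 ⟨mem_pairs.2 ⟨⟨hC, hcC⟩, hB', hcB⟩, fun t => ?_⟩,
    Prod.ext hA hB⟩
  rcases lt_or_ge t (m + 1) with ht | ht
  · have := hv.countBelow_lt t ht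
    rw [← hA, ← hB, countBelow_shiftUp, countBelow_insert_of_le (Nat.lt_succ_iff.1 ht)] at this
    exact Nat.lt_succ_iff.1 this
  · rw [countBelow_of_subset_range hB' (by omega), countBelow_of_subset_range hC (by omega),
      hcB, hcC]

theorem card_balancedPairs_succ (m p : ℕ) :
    #(balancedPairs (m + 1) (p + 1)) = #(dominatedPairs m p) := by
  refine (card_nbij (s := dominatedPairs m p) (fun q => (shiftUp q.1, insert m q.2))
    (fun q hq => shift_mem_balancedPairs hq) (fun q hq q' hq' h => ?_)
    (fun q hq => exists_shift_eq hq)).symm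
  have hm : ∀ {q}, q ∈ dominatedPairs m p → m ∉ q.2 := fun hq h =>
    (mem_range.1 ((mem_pairs.1 (mem_dominatedPairs.1 hq).1).2.1 h)).false
  simp only [Prod.mk.injEq] at h
  exact Prod.ext (shiftUp_injective h.1)
    (by rw [← erase_insert (hm hq), h.2, erase_insert (hm hq')])

end Shift

lemma choose_mul_choose_div_eq (m p : ℕ) :
    m.choose p * (m + 1).choose p / (p + 1) =
      (m + 1).choose (p + 1) * (m + 1).choose p / (m + 1) := by
  rw [← Nat.mul_div_mul_right _ _ m.succ_pos, ← Nat.mul_div_mul_left _ (m + 1) p.succ_pos]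
  congr 1
  calc m.choose p * (m + 1).choose p * (m + 1)
      = (m + 1).choose p * ((m + 1) * m.choose p) := by ring
    _ = (p + 1) * ((m + 1).choose (p + 1) * (m + 1).choose p) := by
      rw [Nat.add_one_mul_choose_eq]; ring

lemma narayana_symm (p r : ℕ) :
    (p + r).choose p * (p + r + 1).choose p / (p + 1) =
      (p + r).choose r * (p + r + 1).choose r / (r + 1) := by
  rw [choose_mul_choose_div_eq, choose_mul_choose_div_eq, mul_comm,
    Nat.choose_symm_of_eq_add (show p + r + 1 = p + (r + 1) by ring),
    Nat.choose_symm_of_eq_add (show p + r + 1 = p + 1 + r by ring)]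

end Narayana

open scoped Classical in
/-- The number of noncrossing partitions of `{1,…,n}` with exactly `k` blocks
is the Narayana number `N(n,k) = (1/k) binomial(n-1,k-1) binomial(n,k-1)`, and
`N(n,k) = N(n,n+1-k)`. -/
theorem narayana_count (n k : ℕ) (hk : 1 ≤ k) (hkn : k ≤ n) :
    (Finset.univ.filter fun π : Finpartition (Finset.univ : Finset (Fin n)) =>
        Noncrossing π ∧ π.parts.card = k).card
      = (n - 1).choose (k - 1) * n.choose (k - 1) / k ∧
    (n - 1).choose (k - 1) * n.choose (k - 1) / k
      = (n - 1).choose (n + 1 - k - 1) * n.choose (n + 1 - k - 1) / (n + 1 - k) := by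
  obtain ⟨p, rfl⟩ : ∃ p, k = p + 1 := ⟨k - 1, by omega⟩
  obtain ⟨r, rfl⟩ : ∃ r, n = p + r + 1 := ⟨n - (p + 1), by omega⟩
  rw [show p + r + 1 + 1 - (p + 1) = r + 1 by omega]
  simp only [Nat.add_sub_cancel]
  refine ⟨?_, Narayana.narayana_symm p r⟩
  rw [Narayana.card_noncrossing_eq_card_balancedPairs, Narayana.card_balancedPairs_succ,
    ← Narayana.succ_mul_card_dominatedPairs, Nat.mul_div_cancel_left _ p.succ_pos]
end

section
/- The number of Motzkin paths of order n (from (1,1) to (2n-1,1) with up, down, and level steps as defined) with exactly j up steps equals C_j * binomial(n-1, 2j), where C_j is the j-th Catalan number. -/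
open Finset

/-- Number of up steps (`true`) among the first `k` steps of `p`. -/
def upCount {m : ℕ} (p : Fin m → Bool) (k : ℕ) : ℕ :=
  (Finset.univ.filter fun i : Fin m => (i : ℕ) < k ∧ p i = true).card

/-- Number of down steps (`false`) among the first `k` steps of `p`. -/
def downCount {m : ℕ} (p : Fin m → Bool) (k : ℕ) : ℕ :=
  (Finset.univ.filter fun i : Fin m => (i : ℕ) < k ∧ p i = false).card

/-- `p` is a Dyck path of order `n`: a path of `2n` steps (up = `true`,
down = `false`), with `n` up steps, never going below the x-axis. -/
def IsDyck (n : ℕ) (p : Fin (2 * n) → Bool) : Prop :=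
  upCount p (2 * n) = n ∧ ∀ k < 2 * n + 1, downCount p k ≤ upCount p k

instance (n : ℕ) : DecidablePred (IsDyck n) := fun p => by
  unfold IsDyck; infer_instance

/-- The Finset of Dyck paths of order `n`. -/
def dyckSet (n : ℕ) : Finset (Fin (2 * n) → Bool) :=
  Finset.univ.filter (IsDyck n)

/-- Height of the path after `k` steps. -/
def height {n : ℕ} (p : Fin (2 * n) → Bool) (k : ℕ) : ℕ :=
  upCount p k - downCount p k

/-- The area of a Dyck path: the number of unused lattice points strictly below
the path and weakly above the x-axis (equivalently, the number of
`1/√2 × 1/√2` diamonds fitting between the path and the x-axis). -/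
def area {n : ℕ} (p : Fin (2 * n) → Bool) : ℕ :=
  ∑ k ∈ Finset.range (2 * n + 1), height p k / 2

/-- The `j`-th step of `p` (defaulting to `false` out of range). -/
def stepAt {m : ℕ} (p : Fin m → Bool) (j : ℕ) : Bool :=
  if h : j < m then p ⟨j, h⟩ else false

/-- The rank of a Dyck path of order `n` in the noncrossing partition lattice
under Stump's bijection: equivalently (Simion–Ullman) the number of letters `b`
and `r` in its SU-word, i.e. the number of `i ∈ {1,…,n-1}` for which the step
leaving the `i`-th odd lattice point (the step with index `2i-1`, 0-indexed)
is an up step. -/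
def rk {n : ℕ} (p : Fin (2 * n) → Bool) : ℕ :=
  ((Finset.Icc 1 (n - 1)).filter fun i => stepAt p (2 * i - 1) = true).card

def upM {k : ℕ} (m : Fin k → Option Bool) (j : ℕ) : ℕ :=
  (Finset.univ.filter fun i : Fin k => (i : ℕ) < j ∧ m i = some true).card

def downM {k : ℕ} (m : Fin k → Option Bool) (j : ℕ) : ℕ :=
  (Finset.univ.filter fun i : Fin k => (i : ℕ) < j ∧ m i = some false).card

/-- A Motzkin word (`some true` = up, `some false` = down, `none` = level):
as many ups as downs, every prefix having at least as many ups as downs.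
A Motzkin path of order `n` is such a word of length `n-1`. -/
def IsMotzkin {k : ℕ} (m : Fin k → Option Bool) : Prop :=
  upM m k = downM m k ∧ ∀ j < k + 1, downM m j ≤ upM m j

instance (k : ℕ) : DecidablePred (IsMotzkin (k := k)) := fun m => by
  unfold IsMotzkin; infer_instance

/-- The Finset of Motzkin paths of order `n` (length `n-1`). -/
def motzSet (n : ℕ) : Finset (Fin (n - 1) → Option Bool) :=
  Finset.univ.filter IsMotzkin

/-- The rank of a Motzkin path: its number of up steps. -/
def rkM {k : ℕ} (m : Fin k → Option Bool) : ℕ := upM m k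

def mext {k : ℕ} (m : Fin k → Option Bool) (i : ℕ) : Option Bool :=
  if h : i < k then m ⟨i, h⟩ else none

/-- ρ : Motzkin paths of order `n` → Dyck paths of order `n`.  Prepend an up
step and append a down step; up steps become two up steps, down steps two down
steps, and each level step becomes a down-up pair. -/
def rho (n : ℕ) (m : Fin (n - 1) → Option Bool) : Fin (2 * n) → Bool := fun j =>
  if (j : ℕ) = 0 then true
  else if (j : ℕ) = 2 * n - 1 then false
  else
    match mext m (((j : ℕ) - 1) / 2) with
    | some b => b
    | none => decide ((j : ℕ) % 2 = 0)

/-- The area of a Motzkin path is the area of the Dyck path `ρ(m)`. -/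
def areaM (n : ℕ) (m : Fin (n - 1) → Option Bool) : ℕ := area (rho n m)


/-!
Deleting the level steps of a Motzkin word of length `k` with `j` up steps leaves a Dyck word of
semilength `j`, and the Motzkin word is recovered from that Dyck word together with the set of
`2 * j` positions of its non-level steps; conversely any Dyck word of semilength `j` can be spread
over any `2 * j` of the `k` positions. The prefix condition survives both ways because the
prefixes of the reduced word are exactly the reductions of the prefixes of the original word.
Hence the count is `C_j * (k choose 2j)`.
-/

open DyckStep

namespace List

variable {α : Type*}

theorem sum_map_ite_eq_count [BEq α] [LawfulBEq α] [DecidableEq α] (l : List α) (a : α) :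
    (l.map fun x => if x = a then 1 else 0).sum = l.count a := by
  induction l with
  | nil => rfl
  | cons x l ih => by_cases hx : x = a <;> simp [hx, ih, add_comm]

theorem count_take_ofFn [BEq α] [LawfulBEq α] [DecidableEq α] {k : ℕ} (f : Fin k → α) (a : α)
    (i : ℕ) :
    ((ofFn f).take i).count a = #{x : Fin k | (x : ℕ) < i ∧ f x = a} := by
  rw [← sum_map_ite_eq_count, map_take, map_ofFn, sum_take_ofFn]
  simp only [Function.comp_def, Finset.sum_boole, Finset.filter_filter, Nat.cast_id]

theorem count_ofFn [BEq α] [LawfulBEq α] [DecidableEq α] {k : ℕ} (f : Fin k → α) (a : α) :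
    (ofFn f).count a = #{x : Fin k | f x = a} := by
  rw [← take_of_length_le (length_ofFn (f := f)).le, count_take_ofFn]
  simp

theorem count_reduceOption [BEq α] [LawfulBEq α] (l : List (Option α)) (a : α) :
    l.reduceOption.count a = l.count (some a) := by
  rw [reduceOption, count_filterMap]
  simp [count_eq_countP]

theorem count_true_map_isSome (l : List (Option α)) :
    (l.map Option.isSome).count true = l.reduceOption.length := by
  rw [reduceOption_length_eq, count_eq_countP, countP_map, countP_eq_length_filter]
  simp [Function.comp_def]

theorem forall_reduceOption_take_iff (l : List (Option α)) (P : List α → Prop) :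
    (∀ i, P (l.take i).reduceOption) ↔ ∀ i, P (l.reduceOption.take i) := by
  constructor
  · intro h i
    obtain ⟨l₁, l₂, hl, hl₁, -⟩ :=
      (reduceOption_eq_append_iff l _ _).mp (take_append_drop i l.reduceOption).symm
    rw [← hl₁]
    simpa [hl] using h l₁.length
  · intro h i
    have hpre := (take_prefix i l).reduceOption
    rw [prefix_iff_eq_take.mp hpre]
    exact h _

def fillMask : List Bool → List α → List (Option α)
  | [], _ => []
  | false :: s, d => none :: fillMask s d
  | true :: s, d => d.head? :: fillMask s d.tail

@[simp]
theorem length_fillMask : ∀ (s : List Bool) (d : List α), (fillMask s d).length = s.length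
  | [], _ => rfl
  | false :: s, d => by simp [fillMask, length_fillMask s d]
  | true :: s, d => by simp [fillMask, length_fillMask s d.tail]

theorem map_isSome_fillMask : ∀ (s : List Bool) (d : List α), s.count true = d.length →
    (fillMask s d).map Option.isSome = s
  | [], _, _ => rfl
  | false :: s, d, h => by simp_all [fillMask, map_isSome_fillMask s d]
  | true :: s, [], h => by simp at h
  | true :: s, a :: d, h => by simp_all [fillMask, map_isSome_fillMask s d]

theorem reduceOption_fillMask : ∀ (s : List Bool) (d : List α), s.count true = d.length →
    (fillMask s d).reduceOption = d
  | [], d, h => by simp_all [fillMask, eq_comm (a := 0)]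
  | false :: s, d, h => by simp_all [fillMask, reduceOption_fillMask s d]
  | true :: s, [], h => by simp at h
  | true :: s, a :: d, h => by simp_all [fillMask, reduceOption_fillMask s d]

theorem fillMask_map_isSome_reduceOption :
    ∀ l : List (Option α), fillMask (l.map Option.isSome) l.reduceOption = l
  | [] => rfl
  | none :: l => by simp [fillMask, fillMask_map_isSome_reduceOption l]
  | some a :: l => by simp [fillMask, fillMask_map_isSome_reduceOption l]

def maskReduceEquiv {k r : ℕ} (D : Set (List α)) (hD : ∀ d ∈ D, d.length = r) :
    {l : List (Option α) // l.length = k ∧ l.reduceOption ∈ D} ≃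
      {s : List Bool // s.length = k ∧ s.count true = r} × D where
  toFun l :=
    (⟨l.1.map Option.isSome, by simpa using l.2.1, by rw [count_true_map_isSome, hD _ l.2.2]⟩,
      ⟨l.1.reduceOption, l.2.2⟩)
  invFun p :=
    ⟨fillMask p.1.1 p.2.1, by simpa using p.1.2.1, by
      rw [reduceOption_fillMask _ _ (by rw [p.1.2.2, hD _ p.2.2])]
      exact p.2.2⟩
  left_inv l := Subtype.ext (fillMask_map_isSome_reduceOption l.1)
  right_inv p := by
    have h : p.1.1.count true = p.2.1.length := by rw [p.1.2.2, hD _ p.2.2]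
    exact Prod.ext (Subtype.ext (map_isSome_fillMask _ _ h))
      (Subtype.ext (reduceOption_fillMask _ _ h))

end List

def Finset.equivBoolFun (α : Type*) [Fintype α] [DecidableEq α] : Finset α ≃ (α → Bool) where
  toFun t a := a ∈ t
  invFun f := {a | f a}
  left_inv t := by ext; simp
  right_inv f := by ext; simp

def boolListEquivFinset (k r : ℕ) :
    {s : List Bool // s.length = k ∧ s.count true = r} ≃ {t : Finset (Fin k) // #t = r} :=
  (Equiv.subtypeSubtypeEquivSubtypeInter (fun s : List Bool => s.length = k)
    (fun s => s.count true = r)).symm.trans <|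
    Equiv.subtypeEquiv ((Equiv.vectorEquivFin Bool k).trans (Finset.equivBoolFun (Fin k)).symm)
      fun ⟨s, hs⟩ => by
        subst hs
        have h_count := List.count_ofFn s.get true
        rw [List.ofFn_get] at h_count
        exact h_count ▸ Iff.rfl

def boolEquivDyckStep : Bool ≃ DyckStep where
  toFun b := if b then U else D
  invFun s := s = U
  left_inv b := by cases b <;> rfl
  right_inv s := by cases s <;> rfl

/-- Up and down steps of `m` become `some U` and `some D`, level steps become holes `none`. -/
def toMotzkinWord {k : ℕ} (m : Fin k → Option Bool) : List (Option DyckStep) :=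
  List.ofFn fun i => (m i).map boolEquivDyckStep

@[simp]
theorem length_toMotzkinWord {k : ℕ} (m : Fin k → Option Bool) : (toMotzkinWord m).length = k :=
  List.length_ofFn

def motzkinWordEquiv (k : ℕ) :
    (Fin k → Option Bool) ≃ {l : List (Option DyckStep) // l.length = k} :=
  (Equiv.arrowCongr (.refl _) (.optionCongr boolEquivDyckStep)).trans
    (Equiv.vectorEquivFin _ k).symm

theorem coe_motzkinWordEquiv {k : ℕ} (m : Fin k → Option Bool) :
    (motzkinWordEquiv k m : List (Option DyckStep)) = toMotzkinWord m :=
  List.Vector.toList_ofFn _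

theorem count_take_toMotzkinWord {k : ℕ} (m : Fin k → Option Bool) (b : Bool) (i : ℕ) :
    ((toMotzkinWord m).take i).count (some (boolEquivDyckStep b))
      = #{x : Fin k | (x : ℕ) < i ∧ m x = some b} := by
  rw [toMotzkinWord, List.count_take_ofFn]
  simp only [(Option.map_injective boolEquivDyckStep.injective).eq_iff' (Option.map_some ..)]

theorem isMotzkin_iff {k : ℕ} (m : Fin k → Option Bool) :
    IsMotzkin m ↔
      (toMotzkinWord m).count (some U) = (toMotzkinWord m).count (some D) ∧
        ∀ i, ((toMotzkinWord m).take i).count (some D) ≤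
          ((toMotzkinWord m).take i).count (some U) := by
  have h_up (i : ℕ) : upM m i = ((toMotzkinWord m).take i).count (some U) :=
    (count_take_toMotzkinWord m true i).symm
  have h_down (i : ℕ) : downM m i = ((toMotzkinWord m).take i).count (some D) :=
    (count_take_toMotzkinWord m false i).symm
  simp only [IsMotzkin, h_up, h_down, List.take_of_length_le (length_toMotzkinWord m).le]
  refine and_congr_right fun _ => ⟨fun h i => ?_, fun h j _ => h j⟩
  rw [List.take_eq_take_min, length_toMotzkinWord]
  exact h _ (by omega)

theorem exists_dyckWord_eq_reduceOption_iff (l : List (Option DyckStep)) :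
    (∃ w : DyckWord, w.toList = l.reduceOption) ↔
      l.count (some U) = l.count (some D) ∧
        ∀ i, (l.take i).count (some D) ≤ (l.take i).count (some U) := by
  simp only [← List.count_reduceOption]
  have h_prefix := List.forall_reduceOption_take_iff l fun d => d.count D ≤ d.count U
  constructor
  · rintro ⟨w, hw⟩
    exact ⟨hw ▸ w.count_U_eq_count_D, h_prefix.mpr fun i => hw ▸ w.count_D_le_count_U i⟩
  · rintro ⟨h_eq, h_le⟩
    exact ⟨⟨l.reduceOption, h_eq, h_prefix.mp h_le⟩, rfl⟩

theorem isMotzkin_and_rkM_eq_iff {k j : ℕ} (m : Fin k → Option Bool) :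
    IsMotzkin m ∧ rkM m = j ↔
      ∃ w : DyckWord, w.semilength = j ∧ w.toList = (toMotzkinWord m).reduceOption := by
  have h_rk : rkM m = (toMotzkinWord m).reduceOption.count U := by
    rw [List.count_reduceOption, ← List.take_of_length_le (length_toMotzkinWord m).le]
    exact (count_take_toMotzkinWord m true k).symm
  rw [isMotzkin_iff, ← exists_dyckWord_eq_reduceOption_iff, h_rk]
  constructor
  · rintro ⟨⟨w, hw⟩, rfl⟩
    exact ⟨w, by rw [DyckWord.semilength, hw], hw⟩
  · rintro ⟨w, rfl, hw⟩
    exact ⟨⟨w, hw⟩, by rw [DyckWord.semilength, hw]⟩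

noncomputable def motzkinWithUpStepsEquiv (k j : ℕ) :
    {m : Fin k → Option Bool // IsMotzkin m ∧ rkM m = j} ≃
      {t : Finset (Fin k) // #t = 2 * j} × {w : DyckWord // w.semilength = j} :=
  let toList : {w : DyckWord // w.semilength = j} → List DyckStep := fun w => w.1.toList
  have h_len : ∀ d ∈ Set.range toList, d.length = 2 * j := by
    rintro _ ⟨w, rfl⟩
    rw [← w.2, w.1.two_mul_semilength_eq_length]
  (Equiv.subtypeEquiv (motzkinWordEquiv k) fun m => by
    simp [isMotzkin_and_rkM_eq_iff, coe_motzkinWordEquiv, toList]).trans <|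
  (Equiv.subtypeSubtypeEquivSubtypeInter _ _).trans <|
  (List.maskReduceEquiv (Set.range toList) h_len).trans <|
  Equiv.prodCongr (boolListEquivFinset k (2 * j))
    (Equiv.ofInjective toList fun _ _ h => Subtype.ext (DyckWord.ext h)).symm

theorem motzkin_count_by_up_steps_general (n j : ℕ) :
    ((motzSet n).filter fun m => rkM m = j).card
      = catalan j * (n - 1).choose (2 * j) := by
  have h_card : ((motzSet n).filter fun m => rkM m = j).card
      = Fintype.card {m : Fin (n - 1) → Option Bool // IsMotzkin m ∧ rkM m = j} := by
    rw [Fintype.card_subtype, motzSet, Finset.filter_filter]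
  rw [h_card, Fintype.card_congr (motzkinWithUpStepsEquiv (n - 1) j), Fintype.card_prod,
    Fintype.card_finset_len, Fintype.card_fin, DyckWord.card_dyckWord_semilength_eq_catalan,
    mul_comm]

/-- The number of Motzkin paths of order `n` with exactly `j` up steps equals
`C_j * binomial(n-1, 2j)`. -/
theorem motzkin_count_by_up_steps (n j : ℕ) (hn : 1 ≤ n) :
    ((motzSet n).filter fun m => rkM m = j).card
      = catalan j * (n - 1).choose (2 * j) :=
  motzkin_count_by_up_steps_general n j
end

section
/- The ordinary generating function D(q,t,z) = sum_{n≥0} D_n(q,t) z^n for Dyck paths counted by area (q), rank (t), and order (z) satisfies the functional equation D(q,t,z) = 1 + z * D(q, 1/t, q t z) * D(q,t,z). -/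
/-!
Every nonempty Dyck path factors uniquely at its first return as `U p₁ D p₂` (Mathlib's
`DyckWord.nest`, `insidePart` and `outsidePart`). Let `a` be the semilength of `p₁`. Inside the
first return the heights of `p₁` are raised by one, which increases `⌊h/2⌋` exactly at the `a`
points of odd height, so `area = a + area p₁ + area p₂`. The rank counts the up steps in odd
positions (the last step, in position `2n - 1`, is always down); the leading `U` exchanges odd and
even positions of `p₁`, so `rk = (a - rk p₁) + rk p₂`. Hence the weight `q^area t^rk` factors as
`(qt)^a · q^area(p₁) t^(-rk p₁) · q^area(p₂) t^rk(p₂)`, and summing over all factorizations gives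
`D_{n+1}(q,t) = ∑_{a+b=n} (qt)^a D_a(q,1/t) D_b(q,t)`, the coefficientwise form of the equation.
-/

open Finset

open DyckStep

lemma Finset.sum_range_two_mul_add_one_mod_two (a : ℕ) : ∑ k ∈ range (2 * a + 1), k % 2 = a := by
  induction a with
  | zero => rfl
  | succ a ih =>
    rw [show 2 * (a + 1) + 1 = 2 * a + 1 + 1 + 1 by ring, sum_range_succ, sum_range_succ, ih]
    omega

lemma List.countP_take_ofFn {α : Type*} {m : ℕ} (f : Fin m → α) (P : α → Bool) (k : ℕ) :
    ((List.ofFn f).take k).countP P = #{i : Fin m | (i : ℕ) < k ∧ P (f i)} := by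
  induction k with
  | zero => simp
  | succ k ih =>
    rw [List.take_add_one, List.countP_append, ih, List.getElem?_ofFn]
    split_ifs with hk
    · rw [Option.toList_some, List.countP_singleton]
      split_ifs with hP
      · rw [← card_insert_of_notMem (a := ⟨k, hk⟩) (by simp)]
        congr 1; ext i; grind
      · rw [add_zero]; congr 1; ext i; grind
    · simp only [Option.toList_none, List.countP_nil, add_zero]
      congr 1; ext i; grind

namespace DyckWord

lemma count_U_add_count_D (l : List DyckStep) : l.count U + l.count D = l.length := by
  induction l with
  | nil => rfl
  | cons s l ih => cases s <;> grind

lemma eq_zero_of_semilength_eq_zero {w : DyckWord} (hw : w.semilength = 0) : w = 0 := by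
  rw [← toList_eq_nil, ← List.length_eq_zero_iff, ← two_mul_semilength_eq_length, hw]

lemma even_length (w : DyckWord) : Even w.toList.length :=
  ⟨w.semilength, by rw [← two_mul_semilength_eq_length, two_mul]⟩

lemma toList_nest_add (p q : DyckWord) :
    (p.nest + q).toList = U :: (p.toList ++ D :: q.toList) := by
  show [U] ++ p.toList ++ [D] ++ q.toList = _
  simp

lemma sum_semilength_succ {M : Type*} [AddCommMonoid M] (f : DyckWord → M) (n : ℕ) :
    ∑ w : {w : DyckWord // w.semilength = n + 1}, f w =
      ∑ ab ∈ antidiagonal n, ∑ p : {p : DyckWord // p.semilength = ab.1},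
        ∑ q : {q : DyckWord // q.semilength = ab.2}, f (p.1.nest + q.1) := by
  have ne_zero : ∀ w : DyckWord, w.semilength = n + 1 → w ≠ 0 := by
    rintro w hw rfl
    simp at hw
  simp_rw [← Fintype.sum_prod_type', sum_sigma']
  symm
  refine sum_bij' (fun x _ => ⟨x.2.1.1.nest + x.2.2.1, ?_⟩)
    (fun w _ => ⟨(w.1.insidePart.semilength, w.1.outsidePart.semilength),
      (⟨w.1.insidePart, rfl⟩, ⟨w.1.outsidePart, rfl⟩)⟩) ?_ ?_ ?_ ?_ ?_
  · obtain ⟨⟨a, b⟩, ⟨p, hp⟩, ⟨q, hq⟩⟩ := x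
    have hab : a + b = n := mem_antidiagonal.1 (mem_sigma.1 ‹_›).1
    dsimp only at hp hq ⊢
    rw [semilength_add, semilength_nest]
    omega
  · simp
  · rintro ⟨w, hw⟩ -
    simpa [hw] using semilength_insidePart_add_semilength_outsidePart_add_one (ne_zero w hw)
  · rintro ⟨⟨a, b⟩, ⟨p, hp⟩, ⟨q, hq⟩⟩ -
    dsimp only at hp hq
    subst hp hq
    rw [insidePart_add nest_ne_zero, insidePart_nest, outsidePart_add nest_ne_zero,
      outsidePart_nest, zero_add]
  · rintro ⟨w, hw⟩ -
    simp only [nest_insidePart_add_outsidePart (ne_zero w hw)]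
  · simp

def oddUps : List DyckStep → ℕ
  | _ :: s :: l => (if s = U then 1 else 0) + oddUps l
  | _ => 0

lemma oddUps_append {l₁ : List DyckStep} (h : Even l₁.length) (l₂ : List DyckStep) :
    oddUps (l₁ ++ l₂) = oddUps l₁ + oddUps l₂ := by
  induction l₁ using oddUps.induct with
  | case1 _ s l ih =>
    simp only [List.cons_append, oddUps, ih (by simpa [parity_simps] using h), add_assoc]
  | case2 l hl =>
    rcases l with _ | ⟨_, _ | ⟨_, _⟩⟩
    · simp [oddUps]
    · simp at h
    · exact absurd rfl (hl _ _ _)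

lemma oddUps_cons_append_singleton (x y : DyckStep) {l : List DyckStep} (h : Even l.length) :
    oddUps (x :: l ++ [y]) + oddUps l = l.count U + if y = U then 1 else 0 := by
  induction l using oddUps.induct generalizing x with
  | case1 u v l ih =>
    have := ih v (by simpa [parity_simps] using h)
    simp only [List.cons_append, oddUps, List.count_cons, beq_iff_eq] at this ⊢
    omega
  | case2 l hl =>
    rcases l with _ | ⟨_, _ | ⟨_, _⟩⟩
    · simp [oddUps]
    · simp at h
    · exact absurd rfl (hl _ _ _)

lemma oddUps_eq_sum (l : List DyckStep) :
    oddUps l = ∑ i ∈ range (l.length / 2), if l[2 * i + 1]? = some U then 1 else 0 := by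
  induction l using oddUps.induct with
  | case1 x s l ih =>
    rw [oddUps, ih, List.length_cons, List.length_cons,
      show (l.length + 1 + 1) / 2 = l.length / 2 + 1 by omega, sum_range_succ', add_comm]
    simp [Nat.mul_add]
  | case2 l hl =>
    rcases l with _ | ⟨_, _ | ⟨_, _⟩⟩
    · simp [oddUps]
    · simp [oddUps]
    · exact absurd rfl (hl _ _ _)

def heightAfter (l : List DyckStep) (k : ℕ) : ℕ := (l.take k).count U - (l.take k).count D

section AreaRank

variable (p q : DyckWord)

def rank : ℕ := oddUps p.toList

def area : ℕ := ∑ k ∈ range (p.toList.length + 1), heightAfter p.toList k / 2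

lemma rank_nest_add : (p.nest + q).rank + p.rank = p.semilength + q.rank := by
  have key := oddUps_cons_append_singleton U D p.even_length
  rw [if_neg (by simp), add_zero] at key
  have split : (p.nest + q).toList = (U :: p.toList ++ [D]) ++ q.toList := by
    simp [toList_nest_add]
  rw [rank, rank, rank, split, oddUps_append (by simpa [parity_simps] using p.even_length),
    semilength]
  omega

lemma rank_eq_sum_Icc :
    p.rank = ∑ i ∈ Icc 1 (p.semilength - 1), if p.toList[2 * i - 1]? = some U then 1 else 0 := by
  rw [rank, oddUps_eq_sum, ← two_mul_semilength_eq_length, Nat.mul_div_cancel_left _ two_pos]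
  rcases Nat.eq_zero_or_pos p.semilength with h | h
  · simp [h]
  obtain ⟨m, hm⟩ := Nat.exists_eq_add_one_of_ne_zero h.ne'
  have hlast : p.toList[2 * m + 1]? = some D := by
    have hp : p.toList ≠ [] := toList_ne_nil.2 (by rintro rfl; simp at hm)
    rw [show 2 * m + 1 = p.toList.length - 1 by rw [← two_mul_semilength_eq_length]; omega,
      ← List.getLast?_eq_getElem?, List.getLast?_eq_some_getLast hp, getLast_eq_D]
  rw [hm, sum_range_succ, hlast, if_neg (by simp), add_zero, Nat.add_sub_cancel,
    ← Ico_add_one_right_eq_Icc, sum_Ico_eq_sum_range, Nat.add_sub_cancel]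
  refine sum_congr rfl fun i _ => ?_
  rw [show 2 * (1 + i) - 1 = 2 * i + 1 by omega]

lemma heightAfter_nest_add_succ {k : ℕ} (hk : k ≤ p.toList.length) :
    heightAfter (p.nest + q).toList (k + 1) / 2 = heightAfter p.toList k / 2 + k % 2 := by
  rw [heightAfter, heightAfter, toList_nest_add, List.take_succ_cons,
    List.take_append_of_le_length hk, List.count_cons_self, List.count_cons_of_ne (by simp)]
  have := count_U_add_count_D (p.toList.take k)
  have := p.count_D_le_count_U k
  rw [List.length_take_of_le hk] at *
  omega

lemma heightAfter_nest_add_add (j : ℕ) :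
    heightAfter (p.nest + q).toList (p.toList.length + 1 + 1 + j) = heightAfter q.toList j := by
  have hU : p.toList.count U = p.semilength := rfl
  have hD := p.semilength_eq_count_D
  rw [heightAfter, heightAfter, toList_nest_add,
    show p.toList.length + 1 + 1 + j = (p.toList.length + (j + 1)) + 1 by omega,
    List.take_succ_cons, List.take_length_add_append, List.take_succ_cons]
  simp only [List.count_cons_self, List.count_cons_of_ne (show U ≠ D by simp),
    List.count_cons_of_ne (show D ≠ U by simp), List.count_append]
  omega

lemma area_nest_add : (p.nest + q).area = p.semilength + p.area + q.area := by
  have hlen : (p.nest + q).toList.length + 1 =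
      (p.toList.length + 1 + 1) + (q.toList.length + 1) := by
    simp only [toList_nest_add, List.length_cons, List.length_append]
    omega
  have inside : ∀ k ∈ range (p.toList.length + 1),
      heightAfter (p.nest + q).toList (k + 1) / 2 = heightAfter p.toList k / 2 + k % 2 :=
    fun k hk => heightAfter_nest_add_succ p q (Nat.lt_succ_iff.1 (mem_range.1 hk))
  rw [area, area, area, hlen, sum_range_add, sum_range_succ', sum_congr rfl inside,
    sum_add_distrib]
  simp only [heightAfter_nest_add_add]
  rw [← two_mul_semilength_eq_length, sum_range_two_mul_add_one_mod_two]
  simp only [heightAfter, List.take_zero, List.count_nil]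
  ring

end AreaRank

section Weight

variable {R K : Type*} [CommSemiring R] [Field K]

def areaRankSum (q t : R) (n : ℕ) : R :=
  ∑ w : {w : DyckWord // w.semilength = n}, q ^ w.1.area * t ^ w.1.rank

lemma areaRankSum_zero (q t : R) : areaRankSum q t 0 = 1 := by
  rw [areaRankSum, Fintype.sum_eq_single (⟨0, rfl⟩ : {w : DyckWord // w.semilength = 0})
    fun w hw => absurd (Subtype.ext (eq_zero_of_semilength_eq_zero w.2)) hw]
  simp [area, rank, oddUps, heightAfter, toList_eq_nil.2 rfl]

lemma weight_nest_add (q : K) {t : K} (ht : t ≠ 0) (p r : DyckWord) :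
    q ^ (p.nest + r).area * t ^ (p.nest + r).rank =
      (q * t) ^ p.semilength * (q ^ p.area * t⁻¹ ^ p.rank) * (q ^ r.area * t ^ r.rank) := by
  have hrank : t ^ (p.nest + r).rank * t ^ p.rank = t ^ p.semilength * t ^ r.rank := by
    rw [← pow_add, ← pow_add, rank_nest_add]
  rw [area_nest_add, inv_pow, mul_pow]
  field_simp
  linear_combination q ^ (p.semilength + p.area + r.area) * hrank

lemma areaRankSum_succ (q : K) {t : K} (ht : t ≠ 0) (n : ℕ) :
    areaRankSum q t (n + 1) =
      ∑ ab ∈ antidiagonal n, (q * t) ^ ab.1 * areaRankSum q t⁻¹ ab.1 * areaRankSum q t ab.2 := by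
  rw [areaRankSum, sum_semilength_succ (fun w => q ^ w.area * t ^ w.rank)]
  refine sum_congr rfl fun ab _ => ?_
  rw [areaRankSum, areaRankSum, mul_assoc, sum_mul_sum, mul_sum]
  refine sum_congr rfl fun p _ => ?_
  rw [mul_sum]
  refine sum_congr rfl fun r _ => ?_
  rw [weight_nest_add q ht, p.2, mul_assoc]

end Weight

end DyckWord

section BoolPaths

variable {m n : ℕ}

def pathWord (p : Fin m → Bool) : List DyckStep := List.ofFn fun i => if p i then U else D

def pathOfList (l : List DyckStep) (m : ℕ) : Fin m → Bool := fun i => decide (l[(i : ℕ)]? = some U)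

@[simp]
lemma length_pathWord (p : Fin m → Bool) : (pathWord p).length = m := List.length_ofFn

lemma pathOfList_pathWord (p : Fin m → Bool) : pathOfList (pathWord p) m = p := by
  ext i
  simp [pathOfList, pathWord]

lemma pathWord_pathOfList {l : List DyckStep} (hl : l.length = m) :
    pathWord (pathOfList l m) = l := by
  refine List.ext_getElem? fun j => ?_
  by_cases hj : j < m
  · rw [pathWord, List.getElem?_ofFn, dif_pos hj]
    simp only [pathOfList, List.getElem?_eq_getElem (show j < l.length by omega)]
    cases l[j] <;> simp
  · rw [pathWord, List.getElem?_ofFn, dif_neg hj, List.getElem?_eq_none (by omega)]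

lemma upCount_eq_count_take (p : Fin m → Bool) (k : ℕ) :
    upCount p k = ((pathWord p).take k).count U := by
  rw [List.count_eq_countP, pathWord, List.countP_take_ofFn, upCount]
  congr 1; ext i; cases p i <;> simp

lemma downCount_eq_count_take (p : Fin m → Bool) (k : ℕ) :
    downCount p k = ((pathWord p).take k).count D := by
  rw [List.count_eq_countP, pathWord, List.countP_take_ofFn, downCount]
  congr 1; ext i; cases p i <;> simp

lemma stepAt_eq_true_iff (p : Fin m → Bool) (j : ℕ) :
    stepAt p j = true ↔ (pathWord p)[j]? = some U := by
  by_cases h : j < m <;> simp [stepAt, pathWord, h]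

lemma isDyck_iff {p : Fin (2 * n) → Bool} : IsDyck n p ↔
    (pathWord p).count U = (pathWord p).count D ∧
      ∀ i, ((pathWord p).take i).count D ≤ ((pathWord p).take i).count U := by
  have hsum := DyckWord.count_U_add_count_D (pathWord p)
  have htake : (pathWord p).take (2 * n) = pathWord p := List.take_of_length_le (by simp)
  simp only [IsDyck, upCount_eq_count_take, downCount_eq_count_take, htake, length_pathWord]
    at hsum ⊢
  refine ⟨fun ⟨hU, hle⟩ => ⟨by omega, fun i => ?_⟩, fun ⟨hUD, hle⟩ => ⟨by omega, fun k _ => hle k⟩⟩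
  rcases Nat.lt_or_ge i (2 * n + 1) with hi | hi
  · exact hle i hi
  · rw [List.take_of_length_le (by rw [length_pathWord]; omega)]
    simpa [htake] using hle (2 * n) (by omega)

def toDyckWord (p : Fin (2 * n) → Bool) (hp : IsDyck n p) : DyckWord :=
  ⟨pathWord p, (isDyck_iff.1 hp).1, (isDyck_iff.1 hp).2⟩

lemma semilength_toDyckWord {p : Fin (2 * n) → Bool} (hp : IsDyck n p) :
    (toDyckWord p hp).semilength = n := by
  have h := upCount_eq_count_take p (2 * n)
  rw [List.take_of_length_le (by simp)] at h
  exact h.symm.trans hp.1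

def dyckWordEquiv (n : ℕ) :
    {p : Fin (2 * n) → Bool // IsDyck n p} ≃ {w : DyckWord // w.semilength = n} where
  toFun p := ⟨toDyckWord p.1 p.2, semilength_toDyckWord p.2⟩
  invFun w := ⟨pathOfList w.1.toList (2 * n), by
    rw [isDyck_iff, pathWord_pathOfList (by rw [← w.1.two_mul_semilength_eq_length, w.2])]
    exact ⟨w.1.count_U_eq_count_D, w.1.count_D_le_count_U⟩⟩
  left_inv p := Subtype.ext (pathOfList_pathWord p.1)
  right_inv w := Subtype.ext <| DyckWord.ext <|
    pathWord_pathOfList (by rw [← w.1.two_mul_semilength_eq_length, w.2])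

lemma area_eq_area_toDyckWord {p : Fin (2 * n) → Bool} (hp : IsDyck n p) :
    area p = (toDyckWord p hp).area := by
  simp only [area, DyckWord.area, height, DyckWord.heightAfter, upCount_eq_count_take,
    downCount_eq_count_take, toDyckWord, length_pathWord]

lemma rk_eq_rank_toDyckWord {p : Fin (2 * n) → Bool} (hp : IsDyck n p) :
    rk p = (toDyckWord p hp).rank := by
  rw [DyckWord.rank_eq_sum_Icc, semilength_toDyckWord, rk, card_filter]
  simp only [stepAt_eq_true_iff]
  rfl

lemma sum_dyckSet_eq_areaRankSum {R : Type*} [CommSemiring R] (q t : R) (n : ℕ) :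
    ∑ p ∈ dyckSet n, q ^ area p * t ^ rk p = DyckWord.areaRankSum q t n := by
  rw [sum_subtype (p := IsDyck n) _ (fun p => by simp [dyckSet]), DyckWord.areaRankSum]
  exact Fintype.sum_equiv (dyckWordEquiv n) _ _ fun p => by
    rw [area_eq_area_toDyckWord p.2, rk_eq_rank_toDyckWord p.2]
    rfl

end BoolPaths

/-- The ordinary generating function `D(q,t,z) = ∑_n D_n(q,t) z^n` satisfies
`D(q,t,z) = 1 + z · D(q,1/t,qtz) · D(q,t,z)`, where
`D(q,1/t,qtz) = ∑_n (qt)^n D_n(q,1/t) z^n`. -/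
theorem generating_function_equation (q t : ℝ) (ht : t ≠ 0) :
    (PowerSeries.mk fun n => ∑ p ∈ dyckSet n, q ^ area p * t ^ rk p) =
      1 + PowerSeries.X *
        (PowerSeries.mk fun n =>
          (q * t) ^ n * ∑ p ∈ dyckSet n, q ^ area p * t⁻¹ ^ rk p) *
        (PowerSeries.mk fun n => ∑ p ∈ dyckSet n, q ^ area p * t ^ rk p) := by
  ext n
  simp only [sum_dyckSet_eq_areaRankSum]
  rcases n with _ | n
  · simp [DyckWord.areaRankSum_zero]
  · rw [map_add, mul_assoc, PowerSeries.coeff_succ_X_mul, PowerSeries.coeff_one,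
      if_neg n.succ_ne_zero, zero_add, PowerSeries.coeff_mul, PowerSeries.coeff_mk,
      DyckWord.areaRankSum_succ q ht]
    simp only [PowerSeries.coeff_mk]
end

section
/- For every permutation σ in the interval [e, (1 2 ... n)] of the absolute order on the symmetric group S_n, the reflection length of σ equals its excedance number: ℓ'(σ) = |{i : σ(i) > i}|. -/
/-!
Write `exc σ` for the number of excedances. Within each cycle of `σ` the largest element is
not an excedance, so `exc σ ≤ ℓ'(σ)` for every permutation. Moreover `exc` is subadditive,
`exc (σ * τ) ≤ exc σ + exc τ`, and the long cycle `c` has `exc c = ℓ'(c) = n - 1`. If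
`ℓ'(σ) + ℓ'(σ⁻¹ c) = ℓ'(c)`, then
`ℓ'(c) = exc c ≤ exc σ + exc (σ⁻¹ c) ≤ ℓ'(σ) + ℓ'(σ⁻¹ c) = ℓ'(c)`,
so both inequalities are equalities and `exc σ = ℓ'(σ)`.
-/

open Finset

/-- The reflection length of a permutation: the minimum number of
transpositions with product `σ`, which equals `n` minus the number of cycles
of `σ`, i.e. the sum over nontrivial cycles of (length − 1). -/
def reflLen {n : ℕ} (σ : Equiv.Perm (Fin n)) : ℕ :=
  σ.cycleType.sum - σ.cycleType.card

namespace Equiv.Perm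

variable {α : Type*} [Fintype α] [LinearOrder α]

def excedances (σ : Perm α) : Finset α := {i | i < σ i}

@[simp]
theorem mem_excedances {σ : Perm α} {i : α} : i ∈ σ.excedances ↔ i < σ i := by
  simp [excedances]

theorem card_excedances_inter_support_lt {σ c : Perm α} (hc : c ∈ σ.cycleFactorsFinset) :
    #(σ.excedances ∩ c.support) < #c.support := by
  obtain ⟨hcycle, hagree⟩ := mem_cycleFactorsFinset_iff.mp hc
  have hne : c.support.Nonempty := hcycle.nonempty_support
  set m := c.support.max' hne
  have hm : m ∈ c.support := c.support.max'_mem hne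
  -- `σ m = c m` lies in the support of `c`, so it cannot exceed its maximum `m`.
  have hm_not_exc : m ∉ σ.excedances := by
    rw [mem_excedances, not_lt, ← hagree m hm]
    exact c.support.le_max' _ (apply_mem_support.mpr hm)
  refine card_lt_card ((ssubset_iff_of_subset inter_subset_right).mpr ⟨m, hm, ?_⟩)
  exact fun h => hm_not_exc (mem_inter.mp h).1

theorem excedances_subset_biUnion_cycleFactorsFinset (σ : Perm α) :
    σ.excedances ⊆ σ.cycleFactorsFinset.biUnion (σ.excedances ∩ ·.support) := by
  intro i hi
  have hi_supp : i ∈ σ.support := mem_support.mpr (mem_excedances.mp hi).ne'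
  exact mem_biUnion.mpr ⟨σ.cycleOf i, cycleOf_mem_cycleFactorsFinset_iff.mpr hi_supp,
    mem_inter.mpr ⟨hi, mem_support_cycleOf_iff.mpr ⟨SameCycle.refl _ _, hi_supp⟩⟩⟩

theorem card_excedances_add_card_cycleType_le (σ : Perm α) :
    #σ.excedances + Multiset.card σ.cycleType ≤ σ.cycleType.sum := by
  calc #σ.excedances + Multiset.card σ.cycleType
      ≤ ∑ c ∈ σ.cycleFactorsFinset, #(σ.excedances ∩ c.support)
          + #σ.cycleFactorsFinset := by
        gcongr
        · exact (card_le_card σ.excedances_subset_biUnion_cycleFactorsFinset).trans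
            card_biUnion_le
        · simp [cycleType_def]
    _ = ∑ c ∈ σ.cycleFactorsFinset, (#(σ.excedances ∩ c.support) + 1) := by
        rw [sum_add_distrib, card_eq_sum_ones]
    _ ≤ ∑ c ∈ σ.cycleFactorsFinset, #c.support :=
        sum_le_sum fun _ hc => card_excedances_inter_support_lt hc
    _ = σ.cycleType.sum := by simp [cycleType_def]

theorem excedances_mul_subset (σ τ : Perm α) :
    (σ * τ).excedances ⊆ τ.excedances ∪ σ.excedances.image τ.symm := by
  intro i hi
  rw [mem_excedances, mul_apply] at hi
  rcases lt_or_ge i (τ i) with hτ | hτ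
  · exact mem_union_left _ (mem_excedances.mpr hτ)
  · exact mem_union_right _
      (mem_image.mpr ⟨τ i, mem_excedances.mpr (hτ.trans_lt hi), τ.symm_apply_apply i⟩)

theorem card_excedances_mul_le (σ τ : Perm α) :
    #(σ * τ).excedances ≤ #σ.excedances + #τ.excedances :=
  calc #(σ * τ).excedances ≤ #(τ.excedances ∪ σ.excedances.image τ.symm) :=
        card_le_card (excedances_mul_subset σ τ)
    _ ≤ #τ.excedances + #(σ.excedances.image τ.symm) := card_union_le _ _
    _ = #σ.excedances + #τ.excedances := by
        rw [card_image_of_injective _ τ.symm.injective, add_comm]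

end Equiv.Perm

open Equiv.Perm

theorem excedances_finRotate_succ (n : ℕ) :
    (finRotate (n + 1)).excedances = univ.erase (Fin.last n) := by
  ext i
  rw [mem_excedances, mem_erase, finRotate_apply]
  simp [Fin.lt_add_one_iff, Fin.lt_last_iff_ne_last]

theorem card_excedances_finRotate (n : ℕ) : #(finRotate n).excedances = n - 1 := by
  cases n with
  | zero => rfl
  | succ n => simp [excedances_finRotate_succ]

theorem reflLen_finRotate (n : ℕ) : reflLen (finRotate n) = n - 1 := by
  rcases lt_or_ge n 2 with hn | hn
  · interval_cases n <;> simp [reflLen, Subsingleton.elim (finRotate _) 1]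
  · simp [reflLen, cycleType_finRotate_of_le hn]

theorem card_excedances_le_reflLen {n : ℕ} (σ : Equiv.Perm (Fin n)) :
    #σ.excedances ≤ reflLen σ := by
  have := σ.card_excedances_add_card_cycleType_le
  unfold reflLen
  omega

/-- For every `σ` in the interval `[e, (1 2 ⋯ n)]` of the absolute order on
`S_n` (i.e. `ℓ'(σ) + ℓ'(σ⁻¹ c) = ℓ'(c)` for the long cycle `c = finRotate n`),
the reflection length of `σ` equals its excedance number. -/
theorem reflection_length_eq_excedance (n : ℕ) (σ : Equiv.Perm (Fin n))
    (h : reflLen σ + reflLen (σ⁻¹ * finRotate n) = reflLen (finRotate n)) :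
    reflLen σ = (Finset.univ.filter fun i : Fin n => i < σ i).card := by
  change reflLen σ = #σ.excedances
  have hσ := card_excedances_le_reflLen σ
  have hτ := card_excedances_le_reflLen (σ⁻¹ * finRotate n)
  have hsub := card_excedances_mul_le σ (σ⁻¹ * finRotate n)
  rw [mul_inv_cancel_left, card_excedances_finRotate, ← reflLen_finRotate] at hsub
  omega
end
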